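/- arXiv:2102.13605 — 4 statements merged into one kernel-verified Lean document; each statement's English description precedes it below -/
import Mathlib

section
/- Let 0 < β < 1, let T be a positive integer, and let 0 ≤ τ < T. Let E⁰_B (initial battery energy), E_target (target battery energy), expected harvested energies E^H_0, …, E^H_{T−1}, actual harvested energies Ê^H_0, …, Ê^H_{τ−1}, and actual allocated energies Ê^A_0, …, Ê^A_{τ−1} be real numbers. Define the initial allocations by E^A_0 = (E⁰_B − E_target + Σ_{t=0}^{T−1} E^H_t) / (Σ_{t=0}^{T−1} β^t) and E^A_t = β^t · E^A_0 for 0 ≤ t ≤ T−1. Define the cumulative deviation Δ_τ = Σ_{t=0}^{τ−1} [(Ê^H_t − E^H_t) + (E^A_t − Ê^A_t)], and the battery level at interval τ by E^B_τ = E⁰_B + Σ_{t=0}^{τ−1} (Ê^H_t − Ê^A_t). Then the re-optimized allocation at interval τ, namely Ê^A_τ = (E^B_τ − E_target + Σ_{t=τ}^{T−1} E^H_t) / (Σ_{t=0}^{T−τ−1} β^t), satisfies Ê^A_τ = E^A_τ + Δ_τ · (1 − β)/(1 − β^{T−τ}). -/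
/-- Lemma 1 (correction of initial allocations): the re-optimized allocation at
interval `τ` equals the initial allocation plus the cumulative deviation times
`(1 - β)/(1 - β^(T-τ))`. -/
theorem eco_correction_lemma
    (β : ℝ) (hβ0 : 0 < β) (hβ1 : β < 1)
    (T : ℕ) (hT : 0 < T) (τ : ℕ) (hτ : τ < T)
    (EB0 Etarget : ℝ) (EH EHhat EAhat : ℕ → ℝ)
    (EA0 : ℝ)
    (hEA0 : EA0 = (EB0 - Etarget + ∑ t ∈ Finset.range T, EH t) /
      (∑ t ∈ Finset.range T, β ^ t))
    (EA : ℕ → ℝ) (hEA : ∀ t, EA t = β ^ t * EA0)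
    (Δτ : ℝ)
    (hΔ : Δτ = ∑ t ∈ Finset.range τ, ((EHhat t - EH t) + (EA t - EAhat t)))
    (EBτ : ℝ)
    (hEB : EBτ = EB0 + ∑ t ∈ Finset.range τ, (EHhat t - EAhat t)) :
    (EBτ - Etarget + ∑ t ∈ Finset.Ico τ T, EH t) /
        (∑ t ∈ Finset.range (T - τ), β ^ t)
      = EA τ + Δτ * (1 - β) / (1 - β ^ (T - τ)) := by
  have hβne : β ≠ 1 := ne_of_lt hβ1
  have h1β : (1 : ℝ) - β ≠ 0 := by linarith
  have hpow : β ^ (T - τ) < 1 := pow_lt_one₀ hβ0.le hβ1 (by omega)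
  have hpowT : β ^ T < 1 := pow_lt_one₀ hβ0.le hβ1 (by omega)
  have h2 : (1 : ℝ) - β ^ (T - τ) ≠ 0 := by linarith
  have h3 : (1 : ℝ) - β ^ T ≠ 0 := by linarith
  have h1β2 : β - 1 ≠ 0 := sub_ne_zero.mpr hβne
  have hS : ∑ t ∈ Finset.range T, β ^ t = (1 - β ^ T) / (1 - β) := by
    rw [geom_sum_eq hβne, div_eq_div_iff h1β2 h1β]; ring
  have hD : ∑ t ∈ Finset.range (T - τ), β ^ t = (1 - β ^ (T - τ)) / (1 - β) := by
    rw [geom_sum_eq hβne, div_eq_div_iff h1β2 h1β]; ring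
  have hSne : ∑ t ∈ Finset.range T, β ^ t ≠ 0 := by
    rw [hS]; exact div_ne_zero h3 h1β
  -- split the Ico sum of EH and of β^t
  have hEHsplit : ∑ t ∈ Finset.Ico τ T, EH t
      = ∑ t ∈ Finset.range T, EH t - ∑ t ∈ Finset.range τ, EH t := by
    exact Finset.sum_Ico_eq_sub _ (le_of_lt hτ)
  have hIco : ∑ t ∈ Finset.Ico τ T, β ^ t
      = β ^ τ * ∑ t ∈ Finset.range (T - τ), β ^ t := by
    rw [Finset.sum_Ico_eq_sum_range, Finset.mul_sum]
    exact Finset.sum_congr rfl fun i _ => by rw [pow_add]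
  have hrangesplit : ∑ t ∈ Finset.range T, β ^ t
      = ∑ t ∈ Finset.range τ, β ^ t + ∑ t ∈ Finset.Ico τ T, β ^ t := by
    rw [Finset.range_eq_Ico, ← Finset.sum_Ico_consecutive _ (Nat.zero_le τ) (le_of_lt hτ)]
    rw [Finset.range_eq_Ico]
  have hEA0' : EB0 - Etarget + ∑ t ∈ Finset.range T, EH t
      = EA0 * ∑ t ∈ Finset.range T, β ^ t := by
    rw [hEA0, div_mul_cancel₀ _ hSne]
  have hEAsum : ∑ t ∈ Finset.range τ, EA t = EA0 * ∑ t ∈ Finset.range τ, β ^ t := by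
    rw [Finset.mul_sum]
    exact Finset.sum_congr rfl fun i _ => by rw [hEA i]; ring
  have hΔ' : Δτ = (∑ t ∈ Finset.range τ, (EHhat t - EAhat t))
      - (∑ t ∈ Finset.range τ, EH t) + ∑ t ∈ Finset.range τ, EA t := by
    simp only [hΔ, Finset.sum_add_distrib, Finset.sum_sub_distrib]
    ring
  have hnum : EBτ - Etarget + ∑ t ∈ Finset.Ico τ T, EH t
      = EA0 * β ^ τ * ∑ t ∈ Finset.range (T - τ), β ^ t + Δτ := by
    have := hEA0'
    rw [hrangesplit, hIco] at this
    rw [hEB, hEHsplit, hΔ', hEAsum]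
    linarith [this]
  rw [hnum, hEA τ, hD]
  have h1β' : (1 : ℝ) - β > 0 := by linarith
  field_simp
end

section
/- Let 0 < β ≤ 1, let T be a positive integer, let M_E > 0, let C > 0, and set S = Σ_{t=0}^{T−1} β^t. If a sequence of positive reals x_0, …, x_{T−1} with Σ_{t=0}^{T−1} x_t = C satisfies Σ_{t=0}^{T−1} β^t · ln(x_t / M_E) = Σ_{t=0}^{T−1} β^t · ln(β^t C / (S · M_E)), then x_t = β^t C / S for every t; that is, the geometric allocation is the unique maximizer of the discounted logarithmic utility subject to the total-energy constraint. -/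
/-- The geometric allocation is the unique maximizer of the discounted
logarithmic utility subject to the total-energy constraint. -/
theorem eco_geometric_allocation_unique
    (β : ℝ) (hβ0 : 0 < β) (hβ1 : β ≤ 1)
    (T : ℕ) (hT : 0 < T)
    (ME : ℝ) (hME : 0 < ME) (C : ℝ) (hC : 0 < C)
    (S : ℝ) (hS : S = ∑ t ∈ Finset.range T, β ^ t)
    (x : ℕ → ℝ) (hx : ∀ t ∈ Finset.range T, 0 < x t)
    (hsum : ∑ t ∈ Finset.range T, x t = C)
    (heq : ∑ t ∈ Finset.range T, β ^ t * Real.log (x t / ME)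
      = ∑ t ∈ Finset.range T, β ^ t * Real.log (β ^ t * C / (S * ME))) :
    ∀ t ∈ Finset.range T, x t = β ^ t * C / S := by
  have hSpos : 0 < S := by
    rw [hS]
    exact Finset.sum_pos (fun t _ => pow_pos hβ0 t) ⟨0, Finset.mem_range.mpr hT⟩
  set y : ℕ → ℝ := fun t => x t * S / (β ^ t * C) with hy
  have hypos : ∀ t ∈ Finset.range T, 0 < y t := fun t ht =>
    div_pos (mul_pos (hx t ht) hSpos) (mul_pos (pow_pos hβ0 t) hC)
  have hlog : ∀ t ∈ Finset.range T,
      β ^ t * Real.log (x t / ME) - β ^ t * Real.log (β ^ t * C / (S * ME))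
      = β ^ t * Real.log (y t) := by
    intro t ht
    have hxt := hx t ht
    have hbt : (0:ℝ) < β ^ t := pow_pos hβ0 t
    have harg : x t / ME / (β ^ t * C / (S * ME)) = y t := by
      simp only [hy]
      field_simp
    rw [← mul_sub, ← Real.log_div (by positivity) (by positivity), harg]
  have hsumlog : ∑ t ∈ Finset.range T, β ^ t * Real.log (y t) = 0 := by
    rw [← Finset.sum_congr rfl hlog, Finset.sum_sub_distrib, heq, sub_self]
  have hsumy : ∑ t ∈ Finset.range T, β ^ t * (y t - 1) = 0 := by
    have h1 : ∀ t ∈ Finset.range T, β ^ t * (y t - 1) = x t * (S / C) - β ^ t := by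
      intro t ht
      have hbt : (0:ℝ) < β ^ t := pow_pos hβ0 t
      simp only [hy]
      field_simp
    rw [Finset.sum_congr rfl h1, Finset.sum_sub_distrib, ← Finset.sum_mul, hsum, ← hS]
    field_simp
    ring
  have key : ∑ t ∈ Finset.range T, β ^ t * ((y t - 1) - Real.log (y t)) = 0 := by
    have : ∀ t ∈ Finset.range T, β ^ t * ((y t - 1) - Real.log (y t))
        = β ^ t * (y t - 1) - β ^ t * Real.log (y t) := by
      intro t _; ring
    rw [Finset.sum_congr rfl this, Finset.sum_sub_distrib, hsumy, hsumlog, sub_self]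
  have hzero : ∀ t ∈ Finset.range T, β ^ t * ((y t - 1) - Real.log (y t)) = 0 := by
    rw [Finset.sum_eq_zero_iff_of_nonneg] at key
    · exact key
    · intro t ht
      have h1 := Real.log_le_sub_one_of_pos (hypos t ht)
      have hbt : (0:ℝ) < β ^ t := pow_pos hβ0 t
      nlinarith
  intro t ht
  have h1 : y t = 1 := by
    by_contra hne
    have h2 := Real.log_lt_sub_one_of_pos (hypos t ht) hne
    have h3 := hzero t ht
    have hbt : (0:ℝ) < β ^ t := pow_pos hβ0 t
    nlinarith
  have h4 : x t * S / (β ^ t * C) = 1 := h1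
  have hbt : (0:ℝ) < β ^ t := pow_pos hβ0 t
  field_simp at h4 ⊢
  linarith
end

section
/- Let 0 < β < 1, let T be a positive integer, and let 0 ≤ τ < T−1. Suppose the initial allocations satisfy E^A_{t+1} = β E^A_t, the cumulative deviation evolves as Δ_{t+1} = Δ_t + Δ^H_t + (E^A_t − Ê^A_t), the correction rule Ê^A_t = E^A_t + Δ_t · (1 − β)/(1 − β^{T−t}) is applied at every interval t ≥ τ, and the harvested energy equals its expected value in every interval t ≥ τ (Δ^H_t = 0 for t ≥ τ). Then the corrected allocations decay geometrically: Ê^A_{t+1} = β · Ê^A_t for all τ ≤ t < T−1. -/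
/-- Under the correction rule with no further harvesting deviations after
interval `τ`, the corrected allocations decay geometrically with ratio `β`. -/
theorem eco_corrected_allocations_geometric
    (β : ℝ) (hβ0 : 0 < β) (hβ1 : β < 1)
    (T : ℕ) (hT : 0 < T) (τ : ℕ) (hτ : τ < T - 1)
    (EA EAhat Δ ΔH : ℕ → ℝ)
    (hEA : ∀ t, EA (t + 1) = β * EA t)
    (hΔrec : ∀ t, Δ (t + 1) = Δ t + ΔH t + (EA t - EAhat t))
    (hcorr : ∀ t, τ ≤ t → t < T →
      EAhat t = EA t + Δ t * (1 - β) / (1 - β ^ (T - t)))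
    (hΔH0 : ∀ t, τ ≤ t → ΔH t = 0) :
    ∀ t, τ ≤ t → t < T - 1 → EAhat (t + 1) = β * EAhat t := by
  intro t ht htT
  have h1 : t + 1 < T := by omega
  have h2 : t < T := by omega
  have pl : ∀ n : ℕ, 0 < n → β ^ n < 1 := fun n hn => pow_lt_one₀ hβ0.le hβ1 hn.ne'
  have d1 : (1 : ℝ) - β ^ (T - t) ≠ 0 := by
    have := pl (T - t) (by omega); linarith
  have d2 : (1 : ℝ) - β ^ (T - (t + 1)) ≠ 0 := by
    have := pl (T - (t + 1)) (by omega); linarith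
  have e1 := hcorr t ht h2
  have e2 := hcorr (t + 1) (by omega) h1
  have hd := hΔrec t
  rw [hΔH0 t ht] at hd
  have hpow : β ^ (T - t) = β * β ^ (T - (t + 1)) := by
    rw [← pow_succ']
    congr 1
    omega
  rw [hpow] at d1
  rw [e2, hd, e1, hEA t, hpow]
  field_simp
  ring
end

section
/- Let 0 < β < 1, let T be a positive integer, and let 0 ≤ τ < T. Let E⁰_B, E_target, E^H_0, …, E^H_{T−1}, and actual values Ê^H_0, …, Ê^H_{T−1}, Ê^A_0, …, Ê^A_{τ−1} be real numbers with Ê^H_t = E^H_t for all t ≥ τ. Define the initial allocations E^A_0 = (E⁰_B − E_target + Σ_{t=0}^{T−1} E^H_t)/(Σ_{t=0}^{T−1} β^t), E^A_t = β^t E^A_0; define cumulative deviations Δ_t = Σ_{s=0}^{t−1}[(Ê^H_s − E^H_s) + (E^A_s − Ê^A_s)], and for t ≥ τ apply the corrected allocations Ê^A_t = E^A_t + Δ_t · (1 − β)/(1 − β^{T−t}). If the battery evolves as E^B_{t+1} = E^B_t + Ê^H_t − Ê^A_t with E^B_0 = E⁰_B, then E^B_T = E_target; that is, the runtime correction rule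 restores exact energy neutrality provided no further deviations occur after interval τ. -/
/-- The runtime correction rule restores exact energy neutrality provided no
further deviations in harvested energy occur after interval `τ`. -/
theorem eco_correction_restores_neutrality
    (β : ℝ) (hβ0 : 0 < β) (hβ1 : β < 1)
    (T : ℕ) (hT : 0 < T) (τ : ℕ) (hτ : τ < T)
    (EB0 Etarget : ℝ) (EH EHhat EAhat : ℕ → ℝ)
    (hEHhat : ∀ t, τ ≤ t → EHhat t = EH t)
    (EA0 : ℝ)
    (hEA0 : EA0 = (EB0 - Etarget + ∑ t ∈ Finset.range T, EH t) /
      (∑ t ∈ Finset.range T, β ^ t))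
    (EA : ℕ → ℝ) (hEA : ∀ t, EA t = β ^ t * EA0)
    (Δ : ℕ → ℝ)
    (hΔ : ∀ t, Δ t = ∑ s ∈ Finset.range t,
      ((EHhat s - EH s) + (EA s - EAhat s)))
    (hcorr : ∀ t, τ ≤ t → t < T →
      EAhat t = EA t + Δ t * (1 - β) / (1 - β ^ (T - t)))
    (EB : ℕ → ℝ) (hEB0 : EB 0 = EB0)
    (hEBrec : ∀ t, EB (t + 1) = EB t + EHhat t - EAhat t) :
    EB T = Etarget := by
  have hgeo : (0:ℝ) < ∑ t ∈ Finset.range T, β ^ t :=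
    Finset.sum_pos (fun i _ => pow_pos hβ0 i) (Finset.nonempty_range_iff.mpr hT.ne')
  have hsumEA : ∑ t ∈ Finset.range T, EA t
      = EB0 - Etarget + ∑ t ∈ Finset.range T, EH t := by
    simp only [hEA]
    rw [← Finset.sum_mul, hEA0]
    field_simp
  have hEBn : ∀ n, EB n = EB0 + ∑ t ∈ Finset.range n, (EHhat t - EAhat t) := by
    intro n; induction n with
    | zero => simp [hEB0]
    | succ n ih => rw [hEBrec, ih, Finset.sum_range_succ]; ring
  have hβm : ∀ m : ℕ, 0 < m → (1 - β ^ m) ≠ 0 := by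
    intro m hm
    have := pow_lt_one₀ hβ0.le hβ1 hm.ne'
    intro h; linarith
  have hinv : ∀ k, τ + k ≤ T →
      Δ (τ + k) * (1 - β ^ (T - τ)) = Δ τ * β ^ k * (1 - β ^ (T - τ - k)) := by
    intro k
    induction k with
    | zero => intro _; simp
    | succ k ih =>
      intro hk
      have hk' : τ + k < T := by omega
      have ih' := ih (le_of_lt hk')
      have hΔs : Δ (τ + k + 1) = Δ (τ + k) + (EA (τ+k) - EAhat (τ+k)) := by
        rw [hΔ (τ + k + 1), hΔ (τ + k), Finset.sum_range_succ, hEHhat _ (by omega)]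
        ring
      rw [hcorr _ (by omega) hk'] at hΔs
      set m := T - (τ + k) with hm
      have hm0 : 0 < m := by omega
      have hne : (1 - β ^ m) ≠ 0 := hβm m hm0
      have hΔ1 : Δ (τ + k + 1) * (1 - β ^ m) = Δ (τ + k) * (β - β ^ m) := by
        rw [hΔs]; field_simp; ring
      have key : Δ (τ + k + 1) * (1 - β ^ (T - τ)) * (1 - β ^ m)
          = Δ τ * β ^ k * (1 - β ^ (T - τ - k)) * (β - β ^ m) := by
        calc Δ (τ + k + 1) * (1 - β ^ (T - τ)) * (1 - β ^ m)
            = (Δ (τ + k + 1) * (1 - β ^ m)) * (1 - β ^ (T - τ)) := by ring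
          _ = (Δ (τ + k) * (β - β ^ m)) * (1 - β ^ (T - τ)) := by rw [hΔ1]
          _ = (Δ (τ + k) * (1 - β ^ (T - τ))) * (β - β ^ m) := by ring
          _ = _ := by rw [ih']
      have hmk : T - τ - k = m := by omega
      have h1 : β - β ^ m = β * (1 - β ^ (m - 1)) := by
        rw [mul_sub, mul_one, ← pow_succ']
        congr 2
        omega
      have h2 : T - τ - (k+1) = m - 1 := by omega
      have hgoal : Δ (τ + (k+1)) * (1 - β ^ (T - τ)) * (1 - β ^ m)
          = Δ τ * β ^ (k+1) * (1 - β ^ (T - τ - (k+1))) * (1 - β ^ m) := by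
        rw [show τ + (k+1) = τ + k + 1 from rfl, key, hmk, h1, h2]; ring
      exact mul_right_cancel₀ hne hgoal
  have hΔT : Δ T = 0 := by
    have h := hinv (T - τ) (by omega)
    rw [show τ + (T - τ) = T by omega, show T - τ - (T - τ) = 0 by omega] at h
    simp at h
    have hne' : (1 - β ^ (T - τ)) ≠ 0 := hβm (T - τ) (by omega)
    rcases h with h | h
    · exact h
    · exact absurd h hne'
  have hsplit : Δ T = (∑ t ∈ Finset.range T, (EHhat t - EAhat t))
      + (∑ t ∈ Finset.range T, EA t) - (∑ t ∈ Finset.range T, EH t) := by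
    rw [hΔ, ← Finset.sum_add_distrib, ← Finset.sum_sub_distrib]
    apply Finset.sum_congr rfl
    intro i _; ring
  rw [hEBn T]
  linarith [hsplit, hsumEA, hΔT]
end
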